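/- arXiv:2305.07526 — 3 statements merged into one kernel-verified Lean document; each statement's English description precedes it below -/
import Mathlib

section
/- Let φ : 𝔻 → 𝔻 be holomorphic with a fixed point α ∈ 𝔻, and suppose there exist a non-constant holomorphic Ψ : 𝔻 → ℂ and a constant τ with |τ| = 1 such that Ψ ∘ φ = τ·Ψ. Then |φ'(α)| = 1. -/
/-!
Normalize `Ψ` to `g = Ψ - Ψ α`, which vanishes at `α` to some finite order `n ≥ 1`, say
`g z = (z - α) ^ n • h z` with `h α ≠ 0`. Writing `φ z - α = (z - α) • dslope φ α z`, the relation
`g ∘ φ = τ • g` becomes `(z - α) ^ n • (dslope φ α z ^ n • h (φ z)) = (z - α) ^ n • (τ • h z)`;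
cancelling `(z - α) ^ n` and letting `z → α` gives `φ'(α) ^ n = τ`, hence `‖φ'(α)‖ ^ n = 1`.
-/

open Set Metric Filter Topology

section

variable {𝕜 E : Type*} [NontriviallyNormedField 𝕜] [NormedAddCommGroup E] [NormedSpace 𝕜 E]

theorem eq_of_eventually_sub_pow_smul_eq {F G : 𝕜 → E} {α : 𝕜} {n : ℕ}
    (hF : ContinuousAt F α) (hG : ContinuousAt G α)
    (h : ∀ᶠ z in 𝓝 α, (z - α) ^ n • F z = (z - α) ^ n • G z) : F α = G α := by
  have hNE : F =ᶠ[𝓝[≠] α] G := by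
    filter_upwards [nhdsWithin_le_nhds h, self_mem_nhdsWithin] with z hz hne
    exact smul_right_injective E (pow_ne_zero n (sub_ne_zero.mpr hne)) hz
  exact ((hF.eventuallyEq_nhds_iff_eventuallyEq_nhdsNE hG).mp hNE).eq_of_nhds

theorem deriv_pow_analyticOrderAt_eq_of_comp_eventuallyEq_smul {f : 𝕜 → 𝕜} {g : 𝕜 → E}
    {α τ : 𝕜} {n : ℕ} (hf : DifferentiableAt 𝕜 f α) (hfix : f α = α) (hg : AnalyticAt 𝕜 g α)
    (hn : analyticOrderAt g α = n) (hgf : ∀ᶠ z in 𝓝 α, g (f z) = τ • g z) :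
    deriv f α ^ n = τ := by
  obtain ⟨h, hh, hhα, hgh⟩ := hg.analyticOrderAt_eq_natCast.mp hn
  have hf_tendsto : Tendsto f (𝓝 α) (𝓝 α) := by simpa only [hfix] using hf.continuousAt.tendsto
  have hfactor : ∀ᶠ z in 𝓝 α,
      (z - α) ^ n • (dslope f α z ^ n • h (f z)) = (z - α) ^ n • (τ • h z) := by
    filter_upwards [hf_tendsto.eventually hgh, hgh, hgf] with z hgfz hgz hz
    have hsub : (z - α) * dslope f α z = f z - α := by
      rw [← smul_eq_mul, sub_smul_dslope, hfix]
    rw [smul_smul, ← mul_pow, hsub, ← hgfz, hz, hgz, smul_comm]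
  have hlim := eq_of_eventually_sub_pow_smul_eq
    (((continuousAt_dslope_same.mpr hf).pow n).smul
      (hh.continuousAt.comp_of_eq hf.continuousAt hfix))
    (hh.continuousAt.const_smul τ) hfactor
  simp only [Pi.smul_apply', Function.comp_apply, Pi.pow_apply, dslope_same, hfix] at hlim
  exact smul_left_injective 𝕜 hhα hlim

theorem AnalyticOnNhd.exists_analyticOrderAt_sub_self_eq_natCast {Ψ : 𝕜 → E} {U : Set 𝕜}
    {α : 𝕜} (hΨ : AnalyticOnNhd 𝕜 Ψ U) (hU : IsPreconnected U) (hα : α ∈ U)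
    (hnc : ¬ ∃ c : E, ∀ z ∈ U, Ψ z = c) :
    ∃ n : ℕ, n ≠ 0 ∧ analyticOrderAt (fun z ↦ Ψ z - Ψ α) α = n := by
  have hga : AnalyticAt 𝕜 (fun z ↦ Ψ z - Ψ α) α := (hΨ α hα).sub analyticAt_const
  have hne_top : analyticOrderAt (fun z ↦ Ψ z - Ψ α) α ≠ ⊤ := by
    intro htop
    refine hnc ⟨Ψ α, fun z hz ↦ ?_⟩
    refine hΨ.eqOn_of_preconnected_of_eventuallyEq (fun _ _ ↦ analyticAt_const) hU hα ?_ hz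
    filter_upwards [analyticOrderAt_eq_top.mp htop] with w hw
    exact sub_eq_zero.mp hw
  lift analyticOrderAt (fun z ↦ Ψ z - Ψ α) α to ℕ using hne_top with n hn
  refine ⟨n, fun hn0 ↦ analyticOrderAt_ne_zero.mpr ⟨hga, sub_self _⟩ ?_, rfl⟩
  rw [← hn, hn0, Nat.cast_zero]

end

theorem eigen_inner_fixed_point_abs_deriv_one_general
    (φ : ℂ → ℂ) (hφ : DifferentiableOn ℂ φ (ball (0:ℂ) 1))
    (α : ℂ) (hα : α ∈ ball (0:ℂ) 1) (hfix : φ α = α)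
    (Ψ : ℂ → ℂ) (hΨ : DifferentiableOn ℂ Ψ (ball (0:ℂ) 1))
    (hnc : ¬ ∃ c : ℂ, ∀ z ∈ ball (0:ℂ) 1, Ψ z = c)
    (τ : ℂ) (hτ : ‖τ‖ = 1)
    (heq : ∀ z ∈ ball (0:ℂ) 1, Ψ (φ z) = τ * Ψ z) :
    ‖deriv φ α‖ = 1 := by
  have hαnhds : ball (0:ℂ) 1 ∈ 𝓝 α := isOpen_ball.mem_nhds hα
  obtain ⟨n, hn0, hn⟩ := (hΨ.analyticOnNhd isOpen_ball).exists_analyticOrderAt_sub_self_eq_natCast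
    (convex_ball (0:ℂ) 1).isPreconnected hα hnc
  have hτΨ : Ψ α = τ * Ψ α := by simpa [hfix] using heq α hα
  have hgφ : ∀ᶠ z in 𝓝 α, Ψ (φ z) - Ψ α = τ • (Ψ z - Ψ α) := by
    filter_upwards [hαnhds] with z hz
    rw [heq z hz, smul_eq_mul, mul_sub, ← hτΨ]
  have hpow : deriv φ α ^ n = τ := deriv_pow_analyticOrderAt_eq_of_comp_eventuallyEq_smul
    (hφ.differentiableAt hαnhds) hfix ((hΨ.analyticAt hαnhds).sub analyticAt_const) hn hgφ
  rw [← pow_eq_one_iff_of_nonneg (norm_nonneg _) hn0, ← norm_pow, hpow, hτ]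

theorem eigen_inner_fixed_point_abs_deriv_one
    (φ : ℂ → ℂ) (hφ : DifferentiableOn ℂ φ (ball (0:ℂ) 1))
    (hmaps : MapsTo φ (ball (0:ℂ) 1) (ball (0:ℂ) 1))
    (α : ℂ) (hα : α ∈ ball (0:ℂ) 1) (hfix : φ α = α)
    (Ψ : ℂ → ℂ) (hΨ : DifferentiableOn ℂ Ψ (ball (0:ℂ) 1))
    (hnc : ¬ ∃ c : ℂ, ∀ z ∈ ball (0:ℂ) 1, Ψ z = c)
    (τ : ℂ) (hτ : ‖τ‖ = 1)
    (heq : ∀ z ∈ ball (0:ℂ) 1, Ψ (φ z) = τ * Ψ z) :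
    ‖deriv φ α‖ = 1 :=
  eigen_inner_fixed_point_abs_deriv_one_general φ hφ α hα hfix Ψ hΨ hnc τ hτ heq
end

section
/- Let φ : 𝔻 → 𝔻 be holomorphic and h : 𝔻 → ℂ holomorphic with h ∘ φ = h + 1. Suppose the function z ↦ exp(2πi·h(z)) − exp(2πi·h(0)) is bounded on 𝔻 and not identically zero. Then for every z₀ ∈ 𝔻, the grand orbit Z of z₀ satisfies the Blaschke condition: ∑_{a ∈ Z} (1 − |a|) < ∞. -/
/-!
Since `h ∘ φ = h + 1`, the function `e = exp (2πi h)` is `φ`-invariant, hence equal to `e z₀`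
on the whole grand orbit of `z₀`. The grand orbit therefore lies in the zero set of the bounded
holomorphic function `e - e z₀`, which does not vanish identically. For such a function `f`,
bounded by `M`, Jensen's formula on the circle of radius `r < 1` bounds `∑ log (r / ‖a‖)` over
any finite set of zeros by `log M - log ‖c‖`, `c` the trailing coefficient of `f` at `0`, up to
a multiple of `log r`; letting `r → 1` and using `1 - ‖a‖ ≤ log (1 / ‖a‖)` bounds the partial
sums of `∑ (1 - ‖a‖)`.
-/

open Complex Set Metric Filter Function MeromorphicOn Topology

lemma Finset.sum_le_add_sum_erase {ι M : Type*} [DecidableEq ι] [AddCommMonoid M] [PartialOrder M]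
    [IsOrderedAddMonoid M] {s : Finset ι} {g : ι → M} (a : ι) (ha : 0 ≤ g a) :
    ∑ x ∈ s, g x ≤ g a + ∑ x ∈ s.erase a, g x := by
  by_cases has : a ∈ s
  · rw [add_sum_erase s g has]
  · rw [erase_eq_of_notMem has]
    exact le_add_of_nonneg_left ha

lemma le_of_eventually_add_mul_log_le {x y c : ℝ}
    (h : ∀ᶠ r in 𝓝[<] 1, x + c * Real.log r ≤ y) : x ≤ y := by
  have hlim : Tendsto (fun r => x + c * Real.log r) (𝓝[<] 1) (𝓝 x) := by
    have := ((Real.continuousAt_log one_ne_zero).tendsto.const_mul c).const_add x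
    simpa using this.mono_left nhdsWithin_le_nhds
  exact le_of_tendsto hlim h

theorem AnalyticOnNhd.one_le_divisor {f : ℂ → ℂ} {U : Set ℂ} {a : ℂ}
    (hf : AnalyticOnNhd ℂ f U) (ha : a ∈ U) (hfa : f a = 0) (hord : analyticOrderAt f a ≠ ⊤) :
    1 ≤ divisor f U a := by
  rw [hf.divisor_apply ha]
  obtain ⟨n, hn⟩ := ENat.ne_top_iff_exists.mp hord
  have hn0 : n ≠ 0 := by
    rintro rfl
    exact (hf a ha).analyticOrderAt_ne_zero.mpr hfa hn.symm
  rw [← hn]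
  simp only [ENat.map_natCast, WithTop.coe_natCast, WithTop.untop₀_natCast, Nat.one_le_cast]
  exact Nat.one_le_iff_ne_zero.mpr hn0

lemma log_mul_inv_norm_nonneg {r : ℝ} {u : ℂ} (h : ‖u‖ ≤ r) : 0 ≤ Real.log (r * ‖u‖⁻¹) := by
  rcases eq_or_ne u 0 with rfl | hu
  · simp
  · exact Real.log_nonneg (by rw [← div_eq_mul_inv, one_le_div₀ (norm_pos_iff.mpr hu)]; exact h)

theorem AnalyticOnNhd.sum_log_mul_inv_norm_le {f : ℂ → ℂ} {r M : ℝ} {T : Finset ℂ}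
    (hr : 0 < r) (hM : 1 ≤ M) (hf : AnalyticOnNhd ℂ f (closedBall 0 r))
    (hbound : ∀ z ∈ sphere (0 : ℂ) r, ‖f z‖ ≤ M)
    (hT : ∀ a ∈ T, a ∈ closedBall 0 r ∧ f a = 0 ∧ analyticOrderAt f a ≠ ⊤) :
    ∑ a ∈ T, Real.log (r * ‖a‖⁻¹) + (meromorphicOrderAt f 0).untop₀ * Real.log r
      ≤ Real.log M - Real.log ‖meromorphicTrailingCoeffAt f 0‖ := by
  rw [← abs_of_pos hr] at hf hbound
  have jensen := hf.meromorphicOn.circleAverage_log_norm hr.ne'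
  set D := divisor f (closedBall 0 |r|)
  have hD0 : D 0 = (meromorphicOrderAt f 0).untop₀ := hf.meromorphicOn.divisor_apply (by simp)
  have havg : Real.circleAverage (Real.log ‖f ·‖) 0 r ≤ Real.log M := by
    refine Real.circleAverage_mono_on_of_le_circle
      (hf.mono sphere_subset_closedBall).meromorphicOn.circleIntegrable_log_norm fun z hz => ?_
    rcases eq_or_ne (f z) 0 with hz0 | hz0
    · simpa [hz0] using Real.log_nonneg hM
    · exact Real.log_le_log (norm_pos_iff.mpr hz0) (hbound z hz)
  have hsum : ∑ a ∈ T, Real.log (r * ‖a‖⁻¹) ≤ ∑ᶠ u, D u * Real.log (r * ‖0 - u‖⁻¹) := by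
    have hfin := D.finiteSupport (isCompact_closedBall 0 |r|)
    have hterm : ∀ u, 0 ≤ (D u : ℝ) * Real.log (r * ‖0 - u‖⁻¹) := fun u => by
      by_cases hu : u ∈ closedBall 0 |r|
      · refine mul_nonneg (mod_cast hf.divisor_nonneg u) (log_mul_inv_norm_nonneg ?_)
        simpa [abs_of_pos hr] using hu
      · simp [D, hu]
    rw [finsum_eq_sum_of_support_subset (s := hfin.toFinset ∪ T)]
    · calc ∑ a ∈ T, Real.log (r * ‖a‖⁻¹)
          ≤ ∑ a ∈ T, (D a : ℝ) * Real.log (r * ‖0 - a‖⁻¹) := by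
            refine Finset.sum_le_sum fun a ha => ?_
            obtain ⟨haB, hfa, hord⟩ := hT a ha
            rw [zero_sub, norm_neg]
            refine le_mul_of_one_le_left (log_mul_inv_norm_nonneg (by simpa using haB)) ?_
            exact_mod_cast hf.one_le_divisor (by rwa [abs_of_pos hr]) hfa hord
        _ ≤ _ := Finset.sum_le_sum_of_subset_of_nonneg Finset.subset_union_right
            fun u _ _ => hterm u
    · intro u hu
      simp only [Finset.coe_union, Set.Finite.coe_toFinset]
      left
      simpa using left_ne_zero_of_mul hu
  rw [hD0] at jensen
  linarith

theorem AnalyticOnNhd.sum_log_inv_norm_le {f : ℂ → ℂ} {M : ℝ} {T : Finset ℂ} (hM : 1 ≤ M)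
    (hf : AnalyticOnNhd ℂ f (ball 0 1)) (hbound : ∀ z ∈ ball (0 : ℂ) 1, ‖f z‖ ≤ M)
    (hT : ∀ a ∈ T, a ∈ ball 0 1 ∧ a ≠ 0 ∧ f a = 0 ∧ analyticOrderAt f a ≠ ⊤) :
    ∑ a ∈ T, Real.log ‖a‖⁻¹ ≤ Real.log M - Real.log ‖meromorphicTrailingCoeffAt f 0‖ := by
  refine le_of_eventually_add_mul_log_le (c := T.card + (meromorphicOrderAt f 0).untop₀) ?_
  have hnear : ∀ᶠ r in 𝓝[<] (1 : ℝ), 0 < r ∧ ∀ a ∈ T, ‖a‖ < r :=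
    Filter.Eventually.and (mem_of_superset (Ioo_mem_nhdsLT zero_lt_one) fun _ hr => hr.1) <|
      (eventually_all_finset T).2 fun a ha =>
        mem_of_superset (Ioo_mem_nhdsLT (mem_ball_zero_iff.mp (hT a ha).1)) fun _ hr => hr.1
  filter_upwards [hnear, self_mem_nhdsWithin] with r ⟨hr0, hrT⟩ (hr1 : r < 1)
  have hr : closedBall (0 : ℂ) r ⊆ ball 0 1 := closedBall_subset_ball hr1
  have jensen := (hf.mono hr).sum_log_mul_inv_norm_le hr0 hM
    (fun z hz => hbound z (hr (sphere_subset_closedBall hz)))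
    (fun a ha => ⟨mem_closedBall_zero_iff.mpr (hrT a ha).le, (hT a ha).2.2⟩)
  rw [Finset.sum_congr rfl fun a ha => Real.log_mul hr0.ne'
    (inv_ne_zero (norm_ne_zero_iff.mpr (hT a ha).2.1)), Finset.sum_add_distrib,
    Finset.sum_const, nsmul_eq_mul] at jensen
  linarith

def BlaschkeCondition (A : Set ℂ) : Prop :=
  Summable fun a : A => 1 - ‖(a : ℂ)‖

theorem BlaschkeCondition.mono {A B : Set ℂ} (hB : BlaschkeCondition B) (hAB : A ⊆ B) :
    BlaschkeCondition A :=
  (hB.comp_injective (inclusion_injective hAB) :)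

theorem blaschkeCondition_zeros_of_bounded {f : ℂ → ℂ} {M : ℝ}
    (hf : DifferentiableOn ℂ f (ball 0 1)) (hbound : ∀ z ∈ ball (0 : ℂ) 1, ‖f z‖ ≤ M)
    (hne : ∃ z ∈ ball (0 : ℂ) 1, f z ≠ 0) :
    BlaschkeCondition (ball 0 1 ∩ f ⁻¹' {0}) := by
  have hf' := hf.analyticOnNhd isOpen_ball
  obtain ⟨w, hw, hfw⟩ := hne
  have hord : ∀ a ∈ ball (0 : ℂ) 1, analyticOrderAt f a ≠ ⊤ := fun a ha =>
    hf'.analyticOrderAt_ne_top_of_isPreconnected (convex_ball 0 1).isPreconnected hw ha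
      (by simp [(hf' w hw).analyticOrderAt_eq_zero.mpr hfw])
  set C := Real.log (max M 1) - Real.log ‖meromorphicTrailingCoeffAt f 0‖
  refine summable_of_sum_le (c := 1 + C)
    (fun a => sub_nonneg.mpr (mem_ball_zero_iff.mp a.2.1).le) fun u => ?_
  set S := u.map (Embedding.subtype _)
  have hS : ∀ a ∈ S, a ∈ ball 0 1 ∧ f a = 0 := by
    simp only [S, Finset.mem_map, Embedding.subtype_apply]
    rintro _ ⟨a, -, rfl⟩
    exact a.2
  have hT : ∀ a ∈ S.erase 0, a ∈ ball 0 1 ∧ a ≠ 0 ∧ f a = 0 ∧ analyticOrderAt f a ≠ ⊤ := by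
    intro a ha
    obtain ⟨ha0, haS⟩ := Finset.mem_erase.mp ha
    exact ⟨(hS a haS).1, ha0, (hS a haS).2, hord a (hS a haS).1⟩
  have hlog := hf'.sum_log_inv_norm_le (le_max_right M 1)
    (fun z hz => (hbound z hz).trans (le_max_left M 1)) hT
  calc ∑ a ∈ u, (1 - ‖(a : ℂ)‖) = ∑ a ∈ S, (1 - ‖a‖) :=
        (Finset.sum_map u (Embedding.subtype _) fun a => 1 - ‖a‖).symm
    -- the origin is invisible to the Jensen sum; as a zero it contributes `1 - ‖0‖ = 1`
    _ ≤ 1 + ∑ a ∈ S.erase 0, (1 - ‖a‖) := by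
        simpa using Finset.sum_le_add_sum_erase (s := S) (g := fun a => 1 - ‖a‖) 0 (by simp)
    _ ≤ 1 + ∑ a ∈ S.erase 0, Real.log ‖a‖⁻¹ := by
      gcongr with a ha
      rw [Real.log_inv]
      linarith [Real.log_le_sub_one_of_pos (norm_pos_iff.mpr (hT a ha).2.1)]
    _ ≤ 1 + C := by linarith

lemma apply_iterate_eq_add_of_apply_eq_add_one {α R : Type*} [AddMonoidWithOne R] {φ : α → α}
    {h : α → R} {U : Set α} (hmaps : MapsTo φ U U) (habel : ∀ z ∈ U, h (φ z) = h z + 1)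
    {z : α} (hz : z ∈ U) (n : ℕ) : h (φ^[n] z) = h z + n := by
  induction n with
  | zero => simp
  | succ n ih =>
    rw [iterate_succ_apply', habel _ (hmaps.iterate n hz), ih, Nat.cast_succ, add_assoc]

lemma exp_two_pi_I_mul_eq_of_iterate_eq {α : Type*} {φ : α → α} {h : α → ℂ} {U : Set α}
    (hmaps : MapsTo φ U U) (habel : ∀ z ∈ U, h (φ z) = h z + 1) {ζ z₀ : α} (hζ : ζ ∈ U)
    (hz₀ : z₀ ∈ U) {n m : ℕ} (heq : φ^[n] ζ = φ^[m] z₀) :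
    exp (2 * Real.pi * I * h ζ) = exp (2 * Real.pi * I * h z₀) := by
  have hshift := congrArg h heq
  rw [apply_iterate_eq_add_of_apply_eq_add_one hmaps habel hζ,
    apply_iterate_eq_add_of_apply_eq_add_one hmaps habel hz₀] at hshift
  exact exp_eq_exp_iff_exists_int.mpr
    ⟨m - n, by push_cast; linear_combination 2 * Real.pi * I * hshift⟩

theorem grand_orbit_blaschke_condition_general
    (φ : ℂ → ℂ)
    (hmaps : MapsTo φ (ball (0:ℂ) 1) (ball (0:ℂ) 1))
    (h : ℂ → ℂ) (hh : DifferentiableOn ℂ h (ball (0:ℂ) 1))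
    (habel : ∀ z ∈ ball (0:ℂ) 1, h (φ z) = h z + 1)
    (hbdd : ∃ C : ℝ, ∀ z ∈ ball (0:ℂ) 1,
      ‖Complex.exp (2 * Real.pi * Complex.I * h z)
        - Complex.exp (2 * Real.pi * Complex.I * h 0)‖ ≤ C)
    (hnz : ∃ z ∈ ball (0:ℂ) 1,
      Complex.exp (2 * Real.pi * Complex.I * h z)
        - Complex.exp (2 * Real.pi * Complex.I * h 0) ≠ 0) :
    ∀ z₀ ∈ ball (0:ℂ) 1,
      Summable (fun a : {ζ : ℂ // ζ ∈ ball (0:ℂ) 1 ∧ ∃ n m : ℕ, φ^[n] ζ = φ^[m] z₀} =>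
        1 - ‖(a : ℂ)‖) := by
  intro z₀ hz₀
  obtain ⟨C, hC⟩ := hbdd
  set e : ℂ → ℂ := fun z => exp (2 * Real.pi * I * h z)
  have hzeros : BlaschkeCondition (ball 0 1 ∩ (fun z => e z - e z₀) ⁻¹' {0}) := by
    refine blaschkeCondition_zeros_of_bounded (M := C + C) ?_ (fun z hz => ?_) ?_
    · exact ((hh.const_mul _).cexp).sub_const _
    · calc ‖e z - e z₀‖ = ‖(e z - e 0) - (e z₀ - e 0)‖ := by rw [sub_sub_sub_cancel_right]
        _ ≤ C + C := (norm_sub_le _ _).trans (add_le_add (hC z hz) (hC z₀ hz₀))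
    · obtain ⟨w, hw, hew⟩ := hnz
      by_cases he0 : e 0 = e z₀
      · exact ⟨w, hw, by rwa [← he0]⟩
      · exact ⟨0, mem_ball_self one_pos, sub_ne_zero.mpr he0⟩
  exact hzeros.mono fun ζ ⟨hζ, _, _, heq⟩ =>
    ⟨hζ, sub_eq_zero.mpr (exp_two_pi_I_mul_eq_of_iterate_eq hmaps habel hζ hz₀ heq)⟩

theorem grand_orbit_blaschke_condition
    (φ : ℂ → ℂ) (hφ : DifferentiableOn ℂ φ (ball (0:ℂ) 1))
    (hmaps : MapsTo φ (ball (0:ℂ) 1) (ball (0:ℂ) 1))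
    (h : ℂ → ℂ) (hh : DifferentiableOn ℂ h (ball (0:ℂ) 1))
    (habel : ∀ z ∈ ball (0:ℂ) 1, h (φ z) = h z + 1)
    (hbdd : ∃ C : ℝ, ∀ z ∈ ball (0:ℂ) 1,
      ‖Complex.exp (2 * Real.pi * Complex.I * h z)
        - Complex.exp (2 * Real.pi * Complex.I * h 0)‖ ≤ C)
    (hnz : ∃ z ∈ ball (0:ℂ) 1,
      Complex.exp (2 * Real.pi * Complex.I * h z)
        - Complex.exp (2 * Real.pi * Complex.I * h 0) ≠ 0) :
    ∀ z₀ ∈ ball (0:ℂ) 1,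
      Summable (fun a : {ζ : ℂ // ζ ∈ ball (0:ℂ) 1 ∧ ∃ n m : ℕ, φ^[n] ζ = φ^[m] z₀} =>
        1 - ‖(a : ℂ)‖) :=
  grand_orbit_blaschke_condition_general φ hmaps h hh habel hbdd hnz
end

section
/- Let φ(z) := ((z + 1/3)/(1 + z/3))², and let zₙ := φ^[n](0). Then zₙ ∈ [0,1) for all n, zₙ → 1 as n → ∞, and ρ(zₙ, z_{n+1}) → 0; i.e., φ is a parabolic self-map of zero hyperbolic step. -/
open Complex Set Metric Filter

/-- The pseudo-hyperbolic distance on the unit disk. -/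
noncomputable def pseudoDist (z w : ℂ) : ℝ :=
  ‖(z - w) / (1 - (starRingEnd ℂ) w * z)‖

/-!
The map is real on the real axis, and there `φ x - x = (1 - x)³ / (3 + x)²`: the orbit of `0`
increases in `[0, 1)`, and its limit, a fixed point in `[0, 1]`, can only be the (triple, hence
parabolic) fixed point `1`. Along the real axis `ρ(x, φ x) = (1 - x)² / (9x² + 14x + 9)`, which
tends to `0` as `x → 1`.
-/

open Function

noncomputable def phi (x : ℝ) : ℝ := ((x + 1/3) / (1 + x/3)) ^ 2

lemma nine_mul_sq_add_fourteen_mul_add_nine_pos (x : ℝ) : 0 < 9 * x ^ 2 + 14 * x + 9 := by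
  nlinarith [sq_nonneg (x + 7/9)]

section

variable {x : ℝ}

lemma phi_sub_self (hx : x ≠ -3) : phi x - x = (1 - x) ^ 3 / (3 + x) ^ 2 := by
  have : 1 + x / 3 ≠ 0 := fun h => hx (by linarith)
  have : 3 + x ≠ 0 := fun h => hx (by linarith)
  rw [phi]
  field_simp
  ring

lemma le_phi (hx : x ≤ 1) (h3 : x ≠ -3) : x ≤ phi x := by
  have := phi_sub_self h3
  have : 0 ≤ (1 - x) ^ 3 / (3 + x) ^ 2 := by
    have : 0 ≤ 1 - x := by linarith
    positivity
  linarith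

lemma phi_eq_self_iff (hx : x ≠ -3) : phi x = x ↔ x = 1 := by
  have h3 : (3 + x) ^ 2 ≠ 0 := pow_ne_zero 2 fun h => hx (by linarith)
  rw [← sub_eq_zero, phi_sub_self hx, div_eq_zero_iff, or_iff_left h3, pow_eq_zero_iff three_ne_zero,
    sub_eq_zero, eq_comm]

lemma continuousAt_phi (hx : x ≠ -3) : ContinuousAt phi x := by
  have : 1 + x / 3 ≠ 0 := fun h => hx (by linarith)
  unfold phi
  fun_prop (disch := assumption)

lemma phi_mem_Ico (hx : x ∈ Ico 0 1) : phi x ∈ Ico 0 1 := by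
  obtain ⟨h0, h1⟩ := hx
  have hd : 0 < 1 + x / 3 := by linarith
  have hq : (x + 1/3) / (1 + x/3) < 1 := by rw [div_lt_one hd]; linarith
  have hq0 : 0 ≤ (x + 1/3) / (1 + x/3) := div_nonneg (by linarith) hd.le
  exact ⟨by unfold phi; positivity, pow_lt_one₀ hq0 hq two_ne_zero⟩

lemma phi_iterate_mem_Ico (hx : x ∈ Ico 0 1) (n : ℕ) : phi^[n] x ∈ Ico 0 1 :=
  MapsTo.iterate (fun _ => phi_mem_Ico) n hx

lemma monotone_phi_iterate (hx : x ∈ Ico 0 1) : Monotone fun n => phi^[n] x := by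
  refine monotone_nat_of_le_succ fun n => ?_
  obtain ⟨h0, h1⟩ := phi_iterate_mem_Ico hx n
  rw [iterate_succ_apply']
  exact le_phi h1.le (by linarith)

lemma tendsto_phi_iterate (hx : x ∈ Ico 0 1) :
    Tendsto (fun n => phi^[n] x) atTop (nhds 1) := by
  have hbdd : BddAbove (range fun n => phi^[n] x) :=
    ⟨1, forall_mem_range.2 fun n => (phi_iterate_mem_Ico hx n).2.le⟩
  have hlim := tendsto_atTop_ciSup (monotone_phi_iterate hx) hbdd
  set L := ⨆ n, phi^[n] x
  have hL : L ≠ -3 := by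
    have : x ≤ L := le_ciSup hbdd 0
    have := hx.1
    intro h
    linarith
  have hfix : phi L = L := isFixedPt_of_tendsto_iterate hlim (continuousAt_phi hL)
  rwa [(phi_eq_self_iff hL).1 hfix] at hlim

lemma pseudoDist_ofReal (a b : ℝ) : pseudoDist a b = |(a - b) / (1 - b * a)| := by
  rw [pseudoDist, conj_ofReal, ← Real.norm_eq_abs, ← norm_real]
  push_cast
  rfl

lemma one_sub_phi_mul_self (hx : x ≠ -3) :
    1 - phi x * x = (1 - x) * (9 * x ^ 2 + 14 * x + 9) / (3 + x) ^ 2 := by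
  have : 1 + x / 3 ≠ 0 := fun h => hx (by linarith)
  have : 3 + x ≠ 0 := fun h => hx (by linarith)
  rw [phi]
  field_simp
  ring

lemma pseudoDist_phi (hx : x ≠ -3) :
    pseudoDist x (phi x) = (1 - x) ^ 2 / (9 * x ^ 2 + 14 * x + 9) := by
  have hq := nine_mul_sq_add_fourteen_mul_add_nine_pos x
  rcases eq_or_ne x 1 with rfl | h1
  · norm_num [pseudoDist, phi]
  have h3 : 3 + x ≠ 0 := fun h => hx (by linarith)
  have h1' : 1 - x ≠ 0 := sub_ne_zero.2 h1.symm
  have : (x - phi x) / (1 - phi x * x) = -((1 - x) ^ 2 / (9 * x ^ 2 + 14 * x + 9)) := by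
    rw [← neg_sub, phi_sub_self hx, one_sub_phi_mul_self hx]
    field_simp
  rw [pseudoDist_ofReal, this, abs_neg, abs_of_nonneg (by positivity)]

lemma tendsto_pseudoDist_phi_iterate (hx : x ∈ Ico 0 1) :
    Tendsto (fun n => pseudoDist (phi^[n] x) (phi (phi^[n] x))) atTop (nhds 0) := by
  have hcont : Continuous fun y : ℝ => (1 - y) ^ 2 / (9 * y ^ 2 + 14 * y + 9) := by
    fun_prop (disch := exact fun y => (nine_mul_sq_add_fourteen_mul_add_nine_pos y).ne')
  have hne (n : ℕ) : phi^[n] x ≠ -3 := by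
    have := (phi_iterate_mem_Ico hx n).1
    linarith
  simpa [pseudoDist_phi (hne _), comp_def] using (hcont.tendsto 1).comp (tendsto_phi_iterate hx)

end

theorem example_map_zero_hyperbolic_step :
    let φ : ℂ → ℂ := fun z => ((z + 1/3) / (1 + z/3))^2
    (∀ n : ℕ, ∃ x : ℝ, x ∈ Set.Ico (0:ℝ) 1 ∧ φ^[n] 0 = (x : ℂ)) ∧
    Tendsto (fun n : ℕ => φ^[n] 0) atTop (nhds (1 : ℂ)) ∧
    Tendsto (fun n : ℕ => pseudoDist (φ^[n] 0) (φ^[n+1] 0)) atTop (nhds 0) := by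
  intro φ
  have hsemiconj : Semiconj ((↑) : ℝ → ℂ) phi φ := fun x => by
    simp only [φ, phi]
    push_cast
    rfl
  have hiter (n : ℕ) : φ^[n] 0 = (phi^[n] 0 : ℝ) := by
    simpa using (hsemiconj.iterate_right n 0).symm
  have h0 : (0 : ℝ) ∈ Ico 0 1 := by norm_num
  refine ⟨fun n => ⟨_, phi_iterate_mem_Ico h0 n, hiter n⟩, ?_, ?_⟩
  · simpa [hiter, comp_def] using (continuous_ofReal.tendsto 1).comp (tendsto_phi_iterate h0)
  · simpa only [hiter, iterate_succ_apply'] using tendsto_pseudoDist_phi_iterate h0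
end
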